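/- arXiv:2110.04947 — 5 statements merged into one kernel-verified Lean document; each statement's English description precedes it below -/
import Mathlib

section
/- Let α > 0, σ² > 0, δ > 0, and let η > 1/(4(1+σ²)). Then every differentiable function λ_B : [0,∞) → ℝ with λ_B(0) = δ that satisfies the differential equation λ_B'(t) = λ_B(t)·(−(1+σ²)·|λ_B(t)|^{4α} + |λ_B(t)|^{2α} − η) for all t ≥ 0 converges to 0 as t → ∞. -/
/-!
Writing `y = |λ|^{2α}`, the rate `-(1+σ²) y² + y - η` is a downward parabola in `y` with
maximum `1/(4(1+σ²)) - η =: -c < 0`. Hence `(λ²)' = 2 λ λ' ≤ -2c λ²`, so `λ² e^{2ct}` is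
nonincreasing on `[0, ∞)` and `|λ(t)| ≤ |λ(0)| e^{-ct} → 0`.
-/

open Filter Set Real Topology

theorem sub_mul_sq_le_one_div_four_mul {A : ℝ} (hA : 0 < A) (y : ℝ) :
    y - A * y ^ 2 ≤ 1 / (4 * A) := by
  rw [le_div_iff₀ (by positivity)]
  nlinarith [sq_nonneg (2 * A * y - 1)]

theorem neg_mul_abs_rpow_add_abs_rpow_sub_le {A : ℝ} (hA : 0 < A) (α η x : ℝ) :
    -A * |x| ^ (4 * α) + |x| ^ (2 * α) - η ≤ -(η - 1 / (4 * A)) := by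
  have hsq : |x| ^ (4 * α) = (|x| ^ (2 * α)) ^ 2 := by
    rw [← rpow_natCast, ← rpow_mul (abs_nonneg x)]
    ring_nf
  rw [hsq]
  linarith [sub_mul_sq_le_one_div_four_mul hA (|x| ^ (2 * α))]

section Decay

variable {f : ℝ → ℝ} {c : ℝ}

theorem antitoneOn_sq_mul_exp (hf : Differentiable ℝ f)
    (hdecay : ∀ t, 0 ≤ t → f t * deriv f t ≤ -c * f t ^ 2) :
    AntitoneOn (fun t => f t ^ 2 * exp (2 * c * t)) (Ici 0) := by
  have hderiv : ∀ t, HasDerivAt (fun t => f t ^ 2 * exp (2 * c * t))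
      (2 * exp (2 * c * t) * (f t * deriv f t + c * f t ^ 2)) t := fun t =>
    (((hf t).hasDerivAt.fun_pow 2).fun_mul
      (((hasDerivAt_id t).const_mul (2 * c)).exp)).congr_deriv (by simp only [id]; ring)
  refine antitoneOn_of_deriv_nonpos (convex_Ici 0)
    (fun t _ => (hderiv t).continuousAt.continuousWithinAt)
    (fun t _ => (hderiv t).differentiableAt.differentiableWithinAt) fun t ht => ?_
  rw [interior_Ici] at ht
  rw [(hderiv t).deriv]
  exact mul_nonpos_of_nonneg_of_nonpos (by positivity) (by linarith [hdecay t ht.le])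

theorem abs_le_abs_mul_exp_of_mul_deriv_le (hf : Differentiable ℝ f)
    (hdecay : ∀ t, 0 ≤ t → f t * deriv f t ≤ -c * f t ^ 2) {t : ℝ} (ht : 0 ≤ t) :
    |f t| ≤ |f 0| * exp (-c * t) := by
  have hsq : (|f t| * exp (c * t)) ^ 2 ≤ |f 0| ^ 2 := by
    have := antitoneOn_sq_mul_exp hf hdecay self_mem_Ici ht ht
    simp only [mul_zero, exp_zero, mul_one] at this
    calc (|f t| * exp (c * t)) ^ 2 = f t ^ 2 * exp (2 * c * t) := by
          rw [mul_pow, sq_abs, ← exp_nat_mul]; push_cast; ring_nf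
      _ ≤ f 0 ^ 2 := this
      _ = |f 0| ^ 2 := (sq_abs _).symm
  have hle := (pow_le_pow_iff_left₀ (by positivity) (abs_nonneg _) two_ne_zero).mp hsq
  rw [neg_mul, exp_neg, ← div_eq_mul_inv, le_div_iff₀ (exp_pos _)]
  exact hle

theorem tendsto_zero_of_mul_deriv_le (hf : Differentiable ℝ f) (hc : 0 < c)
    (hdecay : ∀ t, 0 ≤ t → f t * deriv f t ≤ -c * f t ^ 2) :
    Tendsto f atTop (𝓝 0) := by
  have hexp : Tendsto (fun t => |f 0| * exp (-c * t)) atTop (𝓝 0) := by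
    simpa using (tendsto_exp_atBot.comp
      (tendsto_id.const_mul_atTop_of_neg (neg_neg_of_pos hc))).const_mul |f 0|
  exact squeeze_zero_norm' ((eventually_ge_atTop 0).mono
    fun t ht => abs_le_abs_mul_exp_of_mul_deriv_le hf hdecay ht) hexp

end Decay

theorem directset_nuisance_eigen_to_zero_general
    (α σ2 η : ℝ) (hσ : 0 < σ2)
    (hη : 1 / (4 * (1 + σ2)) < η)
    (lamB : ℝ → ℝ) (hdiff : Differentiable ℝ lamB)
    (hode : ∀ t : ℝ, 0 ≤ t →
      deriv lamB t =
        lamB t * (-(1 + σ2) * |lamB t| ^ (4 * α) + |lamB t| ^ (2 * α) - η)) :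
    Tendsto lamB atTop (nhds 0) := by
  have hrate := neg_mul_abs_rpow_add_abs_rpow_sub_le (by linarith : 0 < 1 + σ2) α η
  refine tendsto_zero_of_mul_deriv_le hdiff (sub_pos.mpr hη) fun t ht => ?_
  calc lamB t * deriv lamB t
      = lamB t ^ 2 * (-(1 + σ2) * |lamB t| ^ (4 * α) + |lamB t| ^ (2 * α) - η) := by
        rw [hode t ht]; ring
    _ ≤ lamB t ^ 2 * -(η - 1 / (4 * (1 + σ2))) :=
        mul_le_mul_of_nonneg_left (hrate (lamB t)) (sq_nonneg _)
    _ = -(η - 1 / (4 * (1 + σ2))) * lamB t ^ 2 := mul_comm _ _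

/-- Under DirectSet(α) gradient flow with weight decay
`η > 1/(4(1+σ²))`, the eigenvalue dynamics in the nuisance subspace `B`,
`λ_B' = λ_B (−(1+σ²)|λ_B|^{4α} + |λ_B|^{2α} − η)` with `λ_B(0) = δ > 0`,
converge to `0`. -/
theorem directset_nuisance_eigen_to_zero
    (α σ2 δ η : ℝ) (hα : 0 < α) (hσ : 0 < σ2) (hδ : 0 < δ)
    (hη : 1 / (4 * (1 + σ2)) < η)
    (lamB : ℝ → ℝ) (hdiff : Differentiable ℝ lamB) (h0 : lamB 0 = δ)
    (hode : ∀ t : ℝ, 0 ≤ t →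
      deriv lamB t =
        lamB t * (-(1 + σ2) * |lamB t| ^ (4 * α) + |lamB t| ^ (2 * α) - η)) :
    Tendsto lamB atTop (nhds 0) :=
  directset_nuisance_eigen_to_zero_general α σ2 η hσ hη lamB hdiff hode
end

section
/- Let α > 0 and 0 < η < 1/4, and let δ > 0 satisfy δ^{2α} > (1−√(1−4η))/2. Then every differentiable function λ_S : [0,∞) → ℝ with λ_S(0) = δ that satisfies the differential equation λ_S'(t) = λ_S(t)·(−|λ_S(t)|^{4α} + |λ_S(t)|^{2α} − η) for all t ≥ 0 satisfies λ_S(t)^{2α} → (1+√(1−4η))/2 as t → ∞. -/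
/-!
Since `λ' = λ g` with `g` continuous, `λ exp (-∫₀ᵗ g)` is constant, so `λ` stays positive and
`y = λ ^ (2α)` solves `y' = -2α y (y - r₋) (y - r₊)`, where `r± = (1 ± √(1 - 4η)) / 2` are the roots
of `z² - z + η`. Starting above `r₋`, `y` never falls below `m = min (y 0) (1 / 2)`, because its
derivative is positive at that level. Hence `((y - r₊)²)' ≤ -4α m (m - r₋) (y - r₊)²`, and
Grönwall's argument gives exponential convergence `y → r₊`.
-/

open Filter Real Set Topology

theorem pos_of_hasDerivAt_eq_mul {f g : ℝ → ℝ} (hg : Continuous g)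
    (hf : ∀ t, 0 ≤ t → HasDerivAt f (f t * g t) t) (h0 : 0 < f 0) {t : ℝ} (ht : 0 ≤ t) :
    0 < f t := by
  set φ : ℝ → ℝ := fun s => f s * exp (-∫ x in (0)..s, g x)
  have hφ : ∀ s, 0 ≤ s → HasDerivAt φ 0 s := fun s hs => by
    have hexp : HasDerivAt (fun x => exp (-∫ y in (0)..x, g y))
        (exp (-∫ y in (0)..s, g y) * -g s) s :=
      (hg.integral_hasStrictDerivAt 0 s).hasDerivAt.fun_neg.exp
    exact ((hf s hs).mul hexp).congr_deriv (by ring)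
  have hmono : MonotoneOn φ (Ici 0) :=
    monotoneOn_of_hasDerivWithinAt_nonneg (convex_Ici 0)
      (fun s hs => (hφ s hs).continuousAt.continuousWithinAt)
      (fun s hs => (hφ s (interior_subset hs)).hasDerivWithinAt) fun _ _ => le_rfl
  have h0t : f 0 ≤ φ t := by simpa [φ] using hmono self_mem_Ici ht ht
  exact pos_of_mul_pos_left (h0.trans_le h0t) (exp_pos _).le

theorem le_mul_exp_neg_of_hasDerivAt_le {u u' : ℝ → ℝ} {k : ℝ}
    (hu : ∀ t, 0 ≤ t → HasDerivAt u (u' t) t) (hle : ∀ t, 0 ≤ t → u' t ≤ -k * u t)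
    {t : ℝ} (ht : 0 ≤ t) : u t ≤ u 0 * exp (-(k * t)) := by
  set φ : ℝ → ℝ := fun s => u s * exp (k * s)
  have hφ : ∀ s, 0 ≤ s → HasDerivAt φ ((u' s + k * u s) * exp (k * s)) s := fun s hs => by
    have hexp : HasDerivAt (fun x => exp (k * x)) (exp (k * s) * k) s := by
      simpa using ((hasDerivAt_id s).const_mul k).exp
    exact ((hu s hs).mul hexp).congr_deriv (by ring)
  have hanti : AntitoneOn φ (Ici 0) :=
    antitoneOn_of_hasDerivWithinAt_nonpos (convex_Ici 0)
      (fun s hs => (hφ s hs).continuousAt.continuousWithinAt)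
      (fun s hs => (hφ s (interior_subset hs)).hasDerivWithinAt) fun s hs =>
        mul_nonpos_of_nonpos_of_nonneg (by linarith [hle s (interior_subset hs)]) (exp_pos _).le
  rw [exp_neg, ← div_eq_mul_inv, le_div_iff₀ (exp_pos _)]
  simpa [φ] using hanti self_mem_Ici ht ht

theorem le_of_forall_eq_imp_deriv_pos {y y' : ℝ → ℝ} {m : ℝ}
    (hy : ∀ t, 0 ≤ t → HasDerivAt y (y' t) t) (h0 : m ≤ y 0)
    (hm : ∀ t, 0 ≤ t → y t = m → 0 < y' t) {t : ℝ} (ht : 0 ≤ t) : m ≤ y t :=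
  image_le_of_deriv_right_lt_deriv_boundary' (f' := 0) continuousOn_const
    (fun _ _ => hasDerivWithinAt_const _ _ m) h0
    (fun s hs => (hy s hs.1).continuousAt.continuousWithinAt)
    (fun s hs => (hy s hs.1).hasDerivWithinAt) (fun s hs hs' => hm s hs.1 hs'.symm) ⟨ht, le_rfl⟩

theorem tendsto_of_sq_sub_le_mul_exp_neg {y : ℝ → ℝ} {r C k : ℝ} (hk : 0 < k)
    (h : ∀ t, 0 ≤ t → (y t - r) ^ 2 ≤ C * exp (-(k * t))) : Tendsto y atTop (𝓝 r) := by
  have hexp : Tendsto (fun t => C * exp (-(k * t))) atTop (𝓝 0) := by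
    simpa using (tendsto_exp_neg_atTop_nhds_zero.comp (tendsto_id.const_mul_atTop hk)).const_mul C
  have hsq : Tendsto (fun t => (y t - r) ^ 2) atTop (𝓝 0) :=
    squeeze_zero' (.of_forall fun _ => sq_nonneg _)
      ((eventually_ge_atTop 0).mono h) hexp
  rw [tendsto_iff_norm_sub_tendsto_zero]
  simpa [sqrt_sq_eq_abs] using hsq.sqrt

theorem tendsto_of_hasDerivAt_neg_mul_mul_sub_mul_sub {y : ℝ → ℝ} {a r₁ r₂ : ℝ} (ha : 0 < a)
    (hr₁ : 0 ≤ r₁) (hr : r₁ < r₂)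
    (hy : ∀ t, 0 ≤ t → HasDerivAt y (-a * y t * ((y t - r₁) * (y t - r₂))) t) (h0 : r₁ < y 0) :
    Tendsto y atTop (𝓝 r₂) := by
  set m := min (y 0) ((r₁ + r₂) / 2)
  have hm₁ : r₁ < m := lt_min h0 (by linarith)
  have hm₂ : m < r₂ := (min_le_right _ _).trans_lt (by linarith)
  have hlow : ∀ t, 0 ≤ t → m ≤ y t :=
    fun t => le_of_forall_eq_imp_deriv_pos hy (min_le_left _ _) fun s _ hs => by
      rw [hs]
      have := mul_pos (mul_pos ha (hr₁.trans_lt hm₁)) (mul_pos (sub_pos.2 hm₁) (sub_pos.2 hm₂))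
      linarith
  have hk : 0 < 2 * a * (m * (m - r₁)) :=
    mul_pos (mul_pos two_pos ha) (mul_pos (hr₁.trans_lt hm₁) (sub_pos.2 hm₁))
  refine tendsto_of_sq_sub_le_mul_exp_neg hk fun t =>
    le_mul_exp_neg_of_hasDerivAt_le (fun s hs => ((hy s hs).sub_const r₂).pow 2) fun s hs => ?_
  have hys : m * (m - r₁) ≤ y s * (y s - r₁) :=
    mul_le_mul (hlow s hs) (by linarith [hlow s hs]) (by linarith) (by linarith [hlow s hs])
  rw [Pi.pow_apply, Nat.cast_ofNat, pow_one]
  nlinarith [mul_le_mul_of_nonneg_left hys (mul_nonneg ha.le (sq_nonneg (y s - r₂)))]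

theorem neg_sq_add_sub_eq_neg_mul (η z : ℝ) (hη : η ≤ 1 / 4) :
    -z ^ 2 + z - η = -((z - (1 - √(1 - 4 * η)) / 2) * (z - (1 + √(1 - 4 * η)) / 2)) := by
  linear_combination (-1 / 4) * sq_sqrt (show 0 ≤ 1 - 4 * η by linarith)

theorem HasDerivAt.rpow_const_of_eq_mul {f : ℝ → ℝ} {g t p : ℝ} (hf : HasDerivAt f (f t * g) t)
    (ht : 0 < f t) : HasDerivAt (fun s => f s ^ p) (p * f t ^ p * g) t := by
  convert hf.rpow_const (p := p) (Or.inl ht.ne') using 1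
  rw [rpow_sub ht, rpow_one]
  field_simp

/-- Under DirectSet(α) gradient flow with weight decay `0 < η < 1/4`,
the eigenvalue dynamics in the invariant subspace `S`,
`λ_S' = λ_S (−|λ_S|^{4α} + |λ_S|^{2α} − η)` with `λ_S(0) = δ` and
`δ^{2α} > (1−√(1−4η))/2`, satisfy `λ_S(t)^{2α} → (1+√(1−4η))/2`. -/
theorem directset_invariant_eigen_converges
    (α η δ : ℝ) (hα : 0 < α) (hη1 : 0 < η) (hη2 : η < 1 / 4) (hδpos : 0 < δ)
    (hδ : (1 - Real.sqrt (1 - 4 * η)) / 2 < δ ^ (2 * α))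
    (lamS : ℝ → ℝ) (hdiff : Differentiable ℝ lamS) (h0 : lamS 0 = δ)
    (hode : ∀ t : ℝ, 0 ≤ t →
      deriv lamS t =
        lamS t * (-|lamS t| ^ (4 * α) + |lamS t| ^ (2 * α) - η)) :
    Tendsto (fun t => lamS t ^ (2 * α)) atTop
      (nhds ((1 + Real.sqrt (1 - 4 * η)) / 2)) := by
  have hode' : ∀ t, 0 ≤ t →
      HasDerivAt lamS (lamS t * (-|lamS t| ^ (4 * α) + |lamS t| ^ (2 * α) - η)) t :=
    fun t ht => hode t ht ▸ (hdiff t).hasDerivAt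
  have hpos : ∀ t, 0 ≤ t → 0 < lamS t := fun t => by
    have := hdiff.continuous
    have : 0 ≤ 2 * α := by positivity
    have : 0 ≤ 4 * α := by positivity
    exact pos_of_hasDerivAt_eq_mul (by fun_prop) hode' (h0 ▸ hδpos)
  have hsqrt : 0 < √(1 - 4 * η) := sqrt_pos.2 (by linarith)
  have hsqrt_le : √(1 - 4 * η) ≤ 1 := sqrt_le_one.2 (by linarith)
  refine tendsto_of_hasDerivAt_neg_mul_mul_sub_mul_sub (y := fun t => lamS t ^ (2 * α))
    (a := 2 * α) (r₁ := (1 - √(1 - 4 * η)) / 2) (by positivity) (by linarith)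
    (by linarith) (fun t ht => ?_) (by rwa [h0])
  have hlam := hpos t ht
  convert (hode' t ht).rpow_const_of_eq_mul (p := 2 * α) hlam using 1
  rw [abs_of_pos hlam, show 4 * α = 2 * α + 2 * α by ring, rpow_add hlam]
  linear_combination (-(2 * α) * lamS t ^ (2 * α)) *
    neg_sq_add_sub_eq_neg_mul η (lamS t ^ (2 * α)) hη2.le
end

section
/- Let d ≥ 1, let P_B be an orthogonal projection matrix in ℝ^{d×d}, and let σ > 0, δ > 0, η > 0, γ > 0 be constants. Let A₁₁, A₁₂, A₀ ∈ ℝ^{d×d} satisfy ‖A₁₁ − (I + σ²P_B)‖ ≤ ε', ‖A₁₂ − I‖ ≤ ε', and ‖A₀ − I‖ ≤ ε' in spectral norm, for some ε' > 0. Define two sequences of d×d matrices by W_0 = W̃_0 = δ·I and, for t ≥ 0, W_{t+1} = W_t + γ( W_{p,t}ᵀ(−W_{p,t}W_t(I+σ²P_B) + W_t) − ηW_t ) with W_{p,t} = W_tW_tᵀ, and W̃_{t+1} = W̃_t + γ( W̃_{p,t}ᵀ(−W̃_{p,t}W̃_tA₁₁ + W̃_tA₁₂) − ηW̃_t ) with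 W̃_{p,t} = W̃_tA₀W̃_tᵀ. Suppose further that ‖W_t‖ ≤ M for all t, for a constant M. Then there exists a constant C₁ > 1 (depending only on σ, δ, η, γ, M) such that for every t with C₁^t · ε' ≤ 1, one has ‖W̃_t − W_t‖ ≤ C₁^t · ε'. -/
open Matrix

/-- The spectral norm (`ℓ²` operator norm) of a real matrix. -/
noncomputable def specNorm {m n : ℕ} (A : Matrix (Fin m) (Fin n) ℝ) : ℝ :=
  ‖LinearMap.toContinuousLinearMap (Matrix.toEuclideanLin A)‖

open scoped Matrix.Norms.L2Operator
set_option maxHeartbeats 1000000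

lemma specNorm_eq {m n : ℕ} (A : Matrix (Fin m) (Fin n) ℝ) : specNorm A = ‖A‖ :=
  (Matrix.l2_opNorm_def A).symm

lemma norm_transpose' {d : ℕ} (A : Matrix (Fin d) (Fin d) ℝ) : ‖Aᵀ‖ = ‖A‖ := by
  rw [← Matrix.conjTranspose_eq_transpose_of_trivial, Matrix.l2_opNorm_conjTranspose]

lemma mul2_le {a b A B : ℝ} (ha : 0 ≤ a) (hb : 0 ≤ b)
    (hA : a ≤ A) (hB : b ≤ B) : a * b ≤ A * B :=
  mul_le_mul hA hB hb (ha.trans hA)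

lemma mul3_le {a b c A B C : ℝ} (ha : 0 ≤ a) (hb : 0 ≤ b) (hc : 0 ≤ c)
    (hA : a ≤ A) (hB : b ≤ B) (hC : c ≤ C) : a * b * c ≤ A * B * C :=
  mul2_le (mul_nonneg ha hb) hc (mul2_le ha hb hA hB) hC

lemma mul_sub_bound {d : ℕ} (a b c e : Matrix (Fin d) (Fin d) ℝ) :
    ‖a * b - c * e‖ ≤ ‖a - c‖ * ‖b‖ + ‖c‖ * ‖b - e‖ := by
  have h : a * b - c * e = (a - c) * b + c * (b - e) := by noncomm_ring
  rw [h]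
  exact (norm_add_le _ _).trans (add_le_add (norm_mul_le _ _) (norm_mul_le _ _))

lemma mul3_sub_bound {d : ℕ} (a b c a' b' c' : Matrix (Fin d) (Fin d) ℝ) :
    ‖a * b * c - a' * b' * c'‖ ≤
      ‖a - a'‖ * ‖b‖ * ‖c‖ + ‖a'‖ * ‖b - b'‖ * ‖c‖ + ‖a'‖ * ‖b'‖ * ‖c - c'‖ := by
  have h : a * b * c - a' * b' * c' =
      (a - a') * b * c + a' * (b - b') * c + a' * b' * (c - c') := by noncomm_ring
  have k : ∀ u v w : Matrix (Fin d) (Fin d) ℝ, ‖u * v * w‖ ≤ ‖u‖ * ‖v‖ * ‖w‖ := by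
    intro u v w
    exact (norm_mul_le _ _).trans (mul2_le (norm_nonneg _) (norm_nonneg _)
      (norm_mul_le _ _) le_rfl)
  rw [h]
  exact (norm_add_le _ _).trans (add_le_add ((norm_add_le _ _).trans
    (add_le_add (k _ _ _) (k _ _ _))) (k _ _ _))

lemma mul3_norm_le {d : ℕ} (u v w : Matrix (Fin d) (Fin d) ℝ) :
    ‖u * v * w‖ ≤ ‖u‖ * ‖v‖ * ‖w‖ :=
  (norm_mul_le _ _).trans (mul2_le (norm_nonneg _) (norm_nonneg _) (norm_mul_le _ _) le_rfl)

/-- One-step coupling estimate. -/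
lemma step_bound {d : ℕ} (γ η B ε e : ℝ) (hγ : 0 < γ) (hη : 0 < η)
    (hB : 2 ≤ B) (hε : 0 ≤ ε) (he : 0 ≤ e)
    (X Y A11 A12 A0 S : Matrix (Fin d) (Fin d) ℝ)
    (h1n : ‖(1 : Matrix (Fin d) (Fin d) ℝ)‖ ≤ 1)
    (hX : ‖X‖ ≤ B) (hY : ‖Y‖ ≤ B) (hS : ‖S‖ ≤ B) (h11 : ‖A11‖ ≤ B)
    (h12 : ‖A12‖ ≤ B) (h0 : ‖A0‖ ≤ B)
    (d11 : ‖A11 - S‖ ≤ ε) (d12 : ‖A12 - 1‖ ≤ ε) (d0 : ‖A0 - 1‖ ≤ ε)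
    (hE : ‖Y - X‖ ≤ e) :
    ‖(Y + γ • ((Y * A0 * Yᵀ)ᵀ * (-(Y * A0 * Yᵀ * Y * A11) + Y * A12) - η • Y))
      - (X + γ • ((X * Xᵀ)ᵀ * (-(X * Xᵀ * X * S) + X) - η • X))‖ ≤
      (1 + γ * η + 8 * γ * B ^ 7) * (e + ε) := by
  have hB0 : (0:ℝ) < B := by linarith
  have nn : ∀ A : Matrix (Fin d) (Fin d) ℝ, (0:ℝ) ≤ ‖A‖ := fun A => norm_nonneg A
  have htY : ‖Yᵀ‖ = ‖Y‖ := norm_transpose' Y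
  have htX : ‖Xᵀ‖ = ‖X‖ := norm_transpose' X
  have htE : ‖Yᵀ - Xᵀ‖ ≤ e := by
    rw [← Matrix.transpose_sub, norm_transpose']; exact hE
  -- difference of P̃ = Y A0 Yᵀ and P = X Xᵀ
  have hΔ : ‖Y * A0 * Yᵀ - X * Xᵀ‖ ≤ e * B * B + B * ε * B + B * 1 * e := by
    have hP1 : X * Xᵀ = X * 1 * Xᵀ := by rw [mul_one]
    rw [hP1]
    refine (mul3_sub_bound Y A0 Yᵀ X 1 Xᵀ).trans ?_
    refine add_le_add (add_le_add ?_ ?_) ?_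
    · exact mul3_le (nn _) (nn _) (nn _) hE h0 (htY ▸ hY)
    · exact mul3_le (nn _) (nn _) (nn _) hX d0 (htY ▸ hY)
    · exact mul3_le (nn _) (nn _) (nn _) hX h1n htE
  set Δ : ℝ := e * B * B + B * ε * B + B * 1 * e with hΔdef
  have hΔ0 : 0 ≤ Δ := by positivity
  -- norms of P̃ and P
  have hPt : ‖Y * A0 * Yᵀ‖ ≤ B * B * B :=
    (mul3_norm_le _ _ _).trans (mul3_le (nn _) (nn _) (nn _) hY h0 (htY ▸ hY))
  have hPn : ‖X * Xᵀ‖ ≤ B * B :=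
    (norm_mul_le _ _).trans (mul2_le (nn _) (nn _) hX (htX ▸ hX))
  -- T1 : first big product difference
  have hT1 : ‖Y * A0 * Yᵀ * Y * A11 - X * Xᵀ * X * S‖ ≤
      Δ * B * B + (B * B) * e * B + (B * B) * B * ε := by
    refine (mul3_sub_bound (Y * A0 * Yᵀ) Y A11 (X * Xᵀ) X S).trans ?_
    refine add_le_add (add_le_add ?_ ?_) ?_
    · exact mul3_le (nn _) (nn _) (nn _) hΔ hY h11
    · exact mul3_le (nn _) (nn _) (nn _) hPn hE h11
    · exact mul3_le (nn _) (nn _) (nn _) hPn hX d11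
  -- second factor difference
  have hR : ‖(-(Y * A0 * Yᵀ * Y * A11) + Y * A12) - (-(X * Xᵀ * X * S) + X)‖ ≤
      (Δ * B * B + (B * B) * e * B + (B * B) * B * ε) + (e * B + B * ε) := by
    have hid : (-(Y * A0 * Yᵀ * Y * A11) + Y * A12) - (-(X * Xᵀ * X * S) + X)
        = (Y * A12 - X) - (Y * A0 * Yᵀ * Y * A11 - X * Xᵀ * X * S) := by abel
    rw [hid]
    refine (norm_sub_le _ _).trans ?_
    rw [add_comm]
    refine add_le_add hT1 ?_
    have hX1 : (Y * A12 - X) = (Y * A12 - X * 1) := by rw [mul_one]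
    rw [hX1]
    refine (mul_sub_bound Y A12 X 1).trans ?_
    exact add_le_add (mul2_le (nn _) (nn _) hE h12) (mul2_le (nn _) (nn _) hX d12)
  -- norm of empirical second factor
  have hRt : ‖-(Y * A0 * Yᵀ * Y * A11) + Y * A12‖ ≤ (B * B * B) * B * B + B * B := by
    refine (norm_add_le _ _).trans ?_
    rw [norm_neg]
    refine add_le_add ?_ ((norm_mul_le _ _).trans (mul2_le (nn _) (nn _) hY h12))
    exact (mul3_norm_le _ _ _).trans (mul3_le (nn _) (nn _) (nn _) hPt hY h11)
  -- big product difference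
  have hQdiff : ‖(Y * A0 * Yᵀ)ᵀ - (X * Xᵀ)ᵀ‖ ≤ Δ := by
    rw [← Matrix.transpose_sub, norm_transpose']; exact hΔ
  have hQn : ‖(X * Xᵀ)ᵀ‖ ≤ B * B := by rw [norm_transpose']; exact hPn
  have hbig : ‖(Y * A0 * Yᵀ)ᵀ * (-(Y * A0 * Yᵀ * Y * A11) + Y * A12)
      - (X * Xᵀ)ᵀ * (-(X * Xᵀ * X * S) + X)‖ ≤
      Δ * ((B * B * B) * B * B + B * B)
        + (B * B) * ((Δ * B * B + (B * B) * e * B + (B * B) * B * ε) + (e * B + B * ε)) := by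
    refine (mul_sub_bound _ _ _ _).trans ?_
    exact add_le_add (mul2_le (nn _) (nn _) hQdiff hRt) (mul2_le (nn _) (nn _) hQn hR)
  -- assemble
  have hmain : (Y + γ • ((Y * A0 * Yᵀ)ᵀ * (-(Y * A0 * Yᵀ * Y * A11) + Y * A12) - η • Y))
      - (X + γ • ((X * Xᵀ)ᵀ * (-(X * Xᵀ * X * S) + X) - η • X))
      = (Y - X) + γ • (((Y * A0 * Yᵀ)ᵀ * (-(Y * A0 * Yᵀ * Y * A11) + Y * A12)
          - (X * Xᵀ)ᵀ * (-(X * Xᵀ * X * S) + X)) - η • (Y - X)) := by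
    module
  rw [hmain]
  refine (norm_add_le _ _).trans ?_
  have h1 : ‖γ • (((Y * A0 * Yᵀ)ᵀ * (-(Y * A0 * Yᵀ * Y * A11) + Y * A12)
      - (X * Xᵀ)ᵀ * (-(X * Xᵀ * X * S) + X)) - η • (Y - X))‖ ≤
      γ * ((Δ * ((B * B * B) * B * B + B * B)
        + (B * B) * ((Δ * B * B + (B * B) * e * B + (B * B) * B * ε) + (e * B + B * ε)))
        + η * e) := by
    rw [norm_smul, Real.norm_eq_abs, abs_of_pos hγ]
    refine mul_le_mul_of_nonneg_left ?_ hγ.le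
    refine (norm_sub_le _ _).trans (add_le_add hbig ?_)
    rw [norm_smul, Real.norm_eq_abs, abs_of_pos hη]
    exact mul_le_mul_of_nonneg_left hE hη.le
  refine (add_le_add hE h1).trans ?_
  have hmono : ∀ i j : ℕ, i ≤ j → B ^ i ≤ B ^ j := fun i j h =>
    pow_le_pow_right₀ (by linarith) h
  have hce : B ^ 7 + 2 * B ^ 6 + 2 * B ^ 5 + B ^ 4 + 2 * B ^ 3 ≤ 8 * B ^ 7 := by
    linarith [hmono 3 7 (by norm_num), hmono 4 7 (by norm_num), hmono 5 7 (by norm_num),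
      hmono 6 7 (by norm_num)]
  have hcε : B ^ 7 + B ^ 6 + B ^ 5 + B ^ 4 + B ^ 3 ≤ 8 * B ^ 7 := by
    linarith [hmono 3 7 (by norm_num), hmono 4 7 (by norm_num), hmono 5 7 (by norm_num),
      hmono 6 7 (by norm_num), pow_nonneg hB0.le 7]
  have hTeq : Δ * ((B * B * B) * B * B + B * B)
      + (B * B) * ((Δ * B * B + (B * B) * e * B + (B * B) * B * ε) + (e * B + B * ε))
      = (B ^ 7 + 2 * B ^ 6 + 2 * B ^ 5 + B ^ 4 + 2 * B ^ 3) * e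
        + (B ^ 7 + B ^ 6 + B ^ 5 + B ^ 4 + B ^ 3) * ε := by
    rw [hΔdef]; ring
  have hT : Δ * ((B * B * B) * B * B + B * B)
      + (B * B) * ((Δ * B * B + (B * B) * e * B + (B * B) * B * ε) + (e * B + B * ε))
      ≤ 8 * B ^ 7 * (e + ε) := by
    rw [hTeq]
    have h1' := mul_le_mul_of_nonneg_right hce he
    have h2' := mul_le_mul_of_nonneg_right hcε hε
    nlinarith [h1', h2']
  have hT' := mul_le_mul_of_nonneg_left (add_le_add hT
    (le_refl (η * e))) hγ.le
  have hfin : (1 + γ * η + 8 * γ * B ^ 7) * (e + ε)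
      = e + γ * (8 * B ^ 7 * (e + ε) + η * e) + (ε + γ * η * ε) := by ring
  have hnn1 : 0 ≤ γ * η * ε := by positivity
  linarith [hT', hnn1, hε]

/-- deterministic coupling between the population gradient-descent
trajectory `W` and the perturbed (empirical) trajectory `W̃` for DirectCopy:
if the second-moment matrices are `ε'`-close to their population counterparts
in spectral norm and `‖W_t‖ ≤ M` for all `t`, then `‖W̃_t − W_t‖ ≤ C₁^t ε'`
whenever `C₁^t ε' ≤ 1`. -/
theorem directcopy_coupling
    (σ δ η γ M : ℝ) (hσ : 0 < σ) (hδ : 0 < δ) (hη : 0 < η) (hγ : 0 < γ)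
    (hM : 0 < M) :
    ∃ C1 : ℝ, 1 < C1 ∧
      ∀ (d : ℕ), 1 ≤ d →
      ∀ PB : Matrix (Fin d) (Fin d) ℝ, PB * PB = PB → PBᵀ = PB →
      ∀ ε' : ℝ, 0 < ε' →
      ∀ A11 A12 A0 : Matrix (Fin d) (Fin d) ℝ,
        specNorm (A11 - (1 + σ ^ 2 • PB)) ≤ ε' →
        specNorm (A12 - 1) ≤ ε' →
        specNorm (A0 - 1) ≤ ε' →
      ∀ W Wtil : ℕ → Matrix (Fin d) (Fin d) ℝ,
        W 0 = δ • (1 : Matrix (Fin d) (Fin d) ℝ) →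
        Wtil 0 = δ • (1 : Matrix (Fin d) (Fin d) ℝ) →
        (∀ t : ℕ, W (t + 1) = W t + γ •
            ((W t * (W t)ᵀ)ᵀ *
                (-((W t * (W t)ᵀ) * W t * (1 + σ ^ 2 • PB)) + W t)
              - η • W t)) →
        (∀ t : ℕ, Wtil (t + 1) = Wtil t + γ •
            ((Wtil t * A0 * (Wtil t)ᵀ)ᵀ *
                (-((Wtil t * A0 * (Wtil t)ᵀ) * Wtil t * A11) + Wtil t * A12)
              - η • Wtil t)) →
        (∀ t : ℕ, specNorm (W t) ≤ M) →
        ∀ t : ℕ, C1 ^ t * ε' ≤ 1 → specNorm (Wtil t - W t) ≤ C1 ^ t * ε' := by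
  set B : ℝ := M + 2 + σ ^ 2 with hBdef
  have hB2 : 2 ≤ B := by nlinarith [sq_nonneg σ]
  have hB0 : (0:ℝ) < B := by linarith
  set L : ℝ := 1 + γ * η + 8 * γ * B ^ 7 with hLdef
  have hL1 : 1 < L := by
    have h7 := pow_pos hB0 7
    nlinarith [mul_pos hγ hη]
  refine ⟨2 * L, by linarith, ?_⟩
  intro d hd PB hPBidem hPBsym ε' hε' A11 A12 A0 h11 h12 h0 W Wtil hW0 hWt0 hWrec hWtrec hWbd
  haveI : NeZero d := ⟨Nat.one_le_iff_ne_zero.mp hd⟩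
  rw [specNorm_eq] at h11 h12 h0
  simp only [specNorm_eq] at hWbd ⊢
  have h1norm : ‖(1 : Matrix (Fin d) (Fin d) ℝ)‖ = 1 := CStarRing.norm_one
  have h1le : ‖(1 : Matrix (Fin d) (Fin d) ℝ)‖ ≤ 1 := le_of_eq h1norm
  -- projection norm
  have hPB1 : ‖PB‖ ≤ 1 := by
    have hstar : star PB = PB := by
      rw [Matrix.star_eq_conjTranspose, Matrix.conjTranspose_eq_transpose_of_trivial, hPBsym]
    have hmm := CStarRing.norm_star_mul_self (x := PB)
    rw [hstar, hPBidem] at hmm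
    nlinarith [norm_nonneg PB]
  have hSB : ‖(1 : Matrix (Fin d) (Fin d) ℝ) + σ ^ 2 • PB‖ ≤ B := by
    refine (norm_add_le _ _).trans ?_
    have : ‖σ ^ 2 • PB‖ = σ ^ 2 * ‖PB‖ := by
      rw [norm_smul, Real.norm_eq_abs, abs_of_pos (by positivity)]
    rw [h1norm, this]
    nlinarith [norm_nonneg PB]
  intro t
  induction t with
  | zero =>
    intro _
    rw [hW0, hWt0, sub_self, pow_zero, one_mul, norm_zero]
    exact hε'.le
  | succ t ih =>
    intro hle
    have hC1 : (1:ℝ) < 2 * L := by linarith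
    have hpow1 : (1:ℝ) ≤ (2 * L) ^ t := one_le_pow₀ hC1.le
    have hpow1' : (1:ℝ) ≤ (2 * L) ^ (t + 1) := one_le_pow₀ hC1.le
    have hmon : (2 * L) ^ t * ε' ≤ (2 * L) ^ (t + 1) * ε' := by
      have h := pow_le_pow_right₀ hC1.le (Nat.le_succ t)
      exact mul_le_mul_of_nonneg_right h hε'.le
    have ht1 : (2 * L) ^ t * ε' ≤ 1 := hmon.trans hle
    have hε1 : ε' ≤ 1 := by
      have h := le_mul_of_one_le_left hε'.le hpow1'
      exact h.trans hle
    have ihe := ih ht1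
    have hεt : 0 ≤ (2 * L) ^ t * ε' := by positivity
    -- norm bounds at time t
    have hXB : ‖W t‖ ≤ B := (hWbd t).trans (by nlinarith [sq_nonneg σ])
    have hYB : ‖Wtil t‖ ≤ B := by
      have h : Wtil t = W t + (Wtil t - W t) := by abel
      calc ‖Wtil t‖ = ‖W t + (Wtil t - W t)‖ := by rw [← h]
        _ ≤ ‖W t‖ + ‖Wtil t - W t‖ := norm_add_le _ _
        _ ≤ M + 1 := add_le_add (hWbd t) (ihe.trans ht1)
        _ ≤ B := by nlinarith [sq_nonneg σ]
    have h11B : ‖A11‖ ≤ B := by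
      have h : ‖A11‖ ≤ ‖A11 - (1 + σ ^ 2 • PB)‖ + ‖(1 : Matrix (Fin d) (Fin d) ℝ) + σ ^ 2 • PB‖ := by
        have hid : A11 = (A11 - (1 + σ ^ 2 • PB)) + (1 + σ ^ 2 • PB) := by abel
        calc ‖A11‖ = ‖(A11 - (1 + σ ^ 2 • PB)) + ((1 : Matrix (Fin d) (Fin d) ℝ) + σ ^ 2 • PB)‖ := by
              rw [← hid]
          _ ≤ _ := norm_add_le _ _
      have hSB1 : ‖(1 : Matrix (Fin d) (Fin d) ℝ) + σ ^ 2 • PB‖ ≤ 1 + σ ^ 2 := by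
        refine (norm_add_le _ _).trans ?_
        have hs : ‖σ ^ 2 • PB‖ = σ ^ 2 * ‖PB‖ := by
          rw [norm_smul, Real.norm_eq_abs, abs_of_pos (by positivity)]
        rw [h1norm, hs]
        nlinarith [norm_nonneg PB]
      calc ‖A11‖ ≤ ‖A11 - (1 + σ ^ 2 • PB)‖ + ‖(1 : Matrix (Fin d) (Fin d) ℝ) + σ ^ 2 • PB‖ := h
        _ ≤ ε' + (1 + σ ^ 2) := add_le_add h11 hSB1
        _ ≤ B := by nlinarith [sq_nonneg σ]
    have hnear : ∀ A : Matrix (Fin d) (Fin d) ℝ, ‖A - 1‖ ≤ ε' → ‖A‖ ≤ B := by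
      intro A hA
      have hid : A = (A - 1) + 1 := by abel
      calc ‖A‖ = ‖(A - 1) + (1 : Matrix (Fin d) (Fin d) ℝ)‖ := by rw [← hid]
        _ ≤ ‖A - 1‖ + ‖(1 : Matrix (Fin d) (Fin d) ℝ)‖ := norm_add_le _ _
        _ ≤ ε' + 1 := add_le_add hA h1le
        _ ≤ B := by nlinarith [sq_nonneg σ]
    have h12B : ‖A12‖ ≤ B := hnear A12 h12
    have h0B : ‖A0‖ ≤ B := hnear A0 h0
    -- apply the one-step bound
    rw [hWrec t, hWtrec t]
    have hstep := step_bound γ η B ε' ((2 * L) ^ t * ε') hγ hη hB2 hε'.le hεt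
      (W t) (Wtil t) A11 A12 A0 (1 + σ ^ 2 • PB) h1le hXB hYB hSB h11B h12B h0B
      h11 h12 h0 ihe
    refine hstep.trans ?_
    have hsum : (2 * L) ^ t * ε' + ε' ≤ 2 * ((2 * L) ^ t * ε') := by
      have h := le_mul_of_one_le_left hε'.le hpow1
      linarith
    calc (1 + γ * η + 8 * γ * B ^ 7) * ((2 * L) ^ t * ε' + ε')
        ≤ L * (2 * ((2 * L) ^ t * ε')) := by
          rw [hLdef]
          exact mul_le_mul_of_nonneg_left hsum (by linarith)
      _ = (2 * L) ^ (t + 1) * ε' := by rw [pow_succ]; ring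
end

section
/- Let α > 0, let l ≥ 1 be an integer with 2αl+2l−2 > 0, and define h : (0,∞) → ℝ by h(λ) = −λ^{4α+2−2/l} + λ^{2α+2−2/l} − η, where 0 < η < 2αl·(2αl+2l−2)^{1+1/α−1/(αl)} / (4αl+2l−2)^{2+1/α−1/(αl)}. Set λ* = ((2αl+2l−2)/(4αl+2l−2))^{1/(2α)}. Then there exist λ⁻ ∈ (0, λ*) and λ⁺ ∈ (λ*, 1) such that h(λ) < 0 for λ ∈ (0, λ⁻), h(λ) > 0 for λ ∈ (λ⁻, λ⁺), h(λ⁻) = h(λ⁺) = 0, and h(λ) < 0 for λ ∈ (λ⁺, ∞). -/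
/-!
With `p = 2α + 2 - 2/l > 0` and `a = 2α`, `h λ = (λ ^ p - λ ^ (p + a)) - η`. The derivative
`λ ^ (p - 1) (p - (p + a) λ ^ a)` shows that `λ ^ p - λ ^ (p + a)` increases on `[0, λ*]` and
decreases on `[λ*, ∞)`, where `λ* = (p / (p + a)) ^ (1 / a)`; it vanishes at `0` and `1`, and its
peak value at `λ*` is exactly the bound on `η`. So `h` rises from `-η` to a positive maximum and
falls back to `-η` at `1`, and the intermediate value theorem gives one zero on each side of `λ*`.
-/

open Set

theorem exists_zeros_of_strictMonoOn_of_strictAntiOn {f : ℝ → ℝ} {a b c : ℝ}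
    (hac : a ≤ c) (hcb : c ≤ b) (hf : ContinuousOn f (Icc a b))
    (hmono : StrictMonoOn f (Icc a c)) (hanti : StrictAntiOn f (Ici c))
    (ha : f a < 0) (hc : 0 < f c) (hb : f b < 0) :
    ∃ x y : ℝ, x ∈ Ioo a c ∧ y ∈ Ioo c b ∧
      (∀ t ∈ Ioo a x, f t < 0) ∧ (∀ t ∈ Ioo x y, 0 < f t) ∧
      f x = 0 ∧ f y = 0 ∧ (∀ t ∈ Ioi y, f t < 0) := by
  obtain ⟨x, hx, hfx⟩ : ∃ x ∈ Ioo a c, f x = 0 :=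
    intermediate_value_Ioo hac (hf.mono (Icc_subset_Icc_right hcb)) ⟨ha, hc⟩
  obtain ⟨y, hy, hfy⟩ : ∃ y ∈ Ioo c b, f y = 0 :=
    intermediate_value_Ioo' hcb (hf.mono (Icc_subset_Icc_left hac)) ⟨hb, hc⟩
  refine ⟨x, y, hx, hy, fun t ht => ?_, fun t ht => ?_, hfx, hfy, fun t ht => ?_⟩
  · rw [← hfx]
    exact hmono ⟨ht.1.le, ht.2.le.trans hx.2.le⟩ ⟨hx.1.le, hx.2.le⟩ ht.2
  · rcases le_or_gt t c with htc | htc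
    · rw [← hfx]
      exact hmono ⟨hx.1.le, hx.2.le⟩ ⟨hx.1.le.trans ht.1.le, htc⟩ ht.1
    · rw [← hfy]
      exact hanti (mem_Ici.2 htc.le) (mem_Ici.2 hy.1.le) ht.2
  · rw [← hfy]
    exact hanti (mem_Ici.2 hy.1.le) (mem_Ici.2 (hy.1.le.trans (le_of_lt ht))) ht

noncomputable def hump (p a x : ℝ) : ℝ := x ^ p - x ^ (p + a)

noncomputable def humpPeak (p a : ℝ) : ℝ := (p / (p + a)) ^ (1 / a)

section Hump

variable {p a : ℝ}

theorem continuous_hump (hp : 0 ≤ p) (hpa : 0 ≤ p + a) : Continuous (hump p a) :=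
  (Real.continuous_rpow_const hp).sub (Real.continuous_rpow_const hpa)

theorem hasDerivAt_hump {x : ℝ} (hx : 0 < x) :
    HasDerivAt (hump p a) (x ^ (p - 1) * (p - (p + a) * x ^ a)) x := by
  have hpow : x ^ (p + a - 1) = x ^ (p - 1) * x ^ a := by
    rw [← Real.rpow_add hx]; ring_nf
  refine ((Real.hasDerivAt_rpow_const (p := p) (Or.inl hx.ne')).sub
    (Real.hasDerivAt_rpow_const (p := p + a) (Or.inl hx.ne'))).congr_deriv ?_
  rw [hpow]; ring

theorem hump_zero (hp : 0 < p) (hpa : 0 < p + a) : hump p a 0 = 0 := by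
  simp [hump, Real.zero_rpow hp.ne', Real.zero_rpow hpa.ne']

theorem hump_one : hump p a 1 = 0 := by
  simp [hump]

theorem humpPeak_pos (hp : 0 < p) (ha : 0 < a) : 0 < humpPeak p a := by
  unfold humpPeak; positivity

theorem humpPeak_lt_one (hp : 0 < p) (ha : 0 < a) : humpPeak p a < 1 :=
  Real.rpow_lt_one (by positivity) ((div_lt_one (by positivity)).2 (by linarith))
    (by positivity)

theorem hump_humpPeak (hp : 0 < p) (ha : 0 < a) :
    hump p a (humpPeak p a) = (p / (p + a)) ^ (p / a) * (a / (p + a)) := by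
  have hr : 0 < p / (p + a) := by positivity
  have hexp : 1 / a * (p + a) = p / a + 1 := by field_simp
  rw [hump, humpPeak, ← Real.rpow_mul hr.le, ← Real.rpow_mul hr.le, hexp,
    Real.rpow_add_one hr.ne']
  field_simp
  ring

theorem lt_humpPeak_iff (hp : 0 ≤ p) (ha : 0 < a) {x : ℝ} (hx : 0 ≤ x) :
    x < humpPeak p a ↔ (p + a) * x ^ a < p := by
  have hpa : 0 < p + a := by linarith
  rw [humpPeak, one_div, Real.lt_rpow_inv_iff_of_pos hx (by positivity) ha, lt_div_iff₀ hpa,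
    mul_comm]

theorem humpPeak_lt_iff (hp : 0 ≤ p) (ha : 0 < a) {x : ℝ} (hx : 0 ≤ x) :
    humpPeak p a < x ↔ p < (p + a) * x ^ a := by
  have hpa : 0 < p + a := by linarith
  rw [humpPeak, one_div, Real.rpow_inv_lt_iff_of_pos (by positivity) hx ha, div_lt_iff₀ hpa,
    mul_comm]

theorem strictMonoOn_hump (hp : 0 < p) (ha : 0 < a) :
    StrictMonoOn (hump p a) (Icc 0 (humpPeak p a)) := by
  refine strictMonoOn_of_deriv_pos (convex_Icc _ _)
    (continuous_hump hp.le (by linarith)).continuousOn fun x hx => ?_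
  rw [interior_Icc] at hx
  have hslope : (p + a) * x ^ a < p := (lt_humpPeak_iff hp.le ha hx.1.le).1 hx.2
  rw [(hasDerivAt_hump hx.1).deriv]
  exact mul_pos (Real.rpow_pos_of_pos hx.1 _) (by linarith)

theorem strictAntiOn_hump (hp : 0 < p) (ha : 0 < a) :
    StrictAntiOn (hump p a) (Ici (humpPeak p a)) := by
  refine strictAntiOn_of_deriv_neg (convex_Ici _)
    (continuous_hump hp.le (by linarith)).continuousOn fun x hx => ?_
  rw [interior_Ici] at hx
  have hx0 : 0 < x := (humpPeak_pos hp ha).trans hx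
  have hslope : p < (p + a) * x ^ a := (humpPeak_lt_iff hp.le ha hx0.le).1 hx
  rw [(hasDerivAt_hump hx0).deriv]
  exact mul_neg_of_pos_of_neg (Real.rpow_pos_of_pos hx0 _) (by linarith)

theorem exists_zeros_hump_sub (hp : 0 < p) (ha : 0 < a) {η : ℝ} (hη : 0 < η)
    (hηpeak : η < hump p a (humpPeak p a)) :
    ∃ x y : ℝ, x ∈ Ioo 0 (humpPeak p a) ∧ y ∈ Ioo (humpPeak p a) 1 ∧
      (∀ t ∈ Ioo 0 x, hump p a t - η < 0) ∧ (∀ t ∈ Ioo x y, 0 < hump p a t - η) ∧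
      hump p a x - η = 0 ∧ hump p a y - η = 0 ∧ (∀ t ∈ Ioi y, hump p a t - η < 0) := by
  have hpa : 0 < p + a := by linarith
  refine exists_zeros_of_strictMonoOn_of_strictAntiOn (humpPeak_pos hp ha).le
    (humpPeak_lt_one hp ha).le ((continuous_hump hp.le hpa.le).sub continuous_const).continuousOn
    (fun x hx y hy hxy => sub_lt_sub_right (strictMonoOn_hump hp ha hx hy hxy) η)
    (fun x hx y hy hxy => sub_lt_sub_right (strictAntiOn_hump hp ha hx hy hxy) η)
    ?_ (sub_pos.2 hηpeak) ?_
  · rw [hump_zero hp hpa]; linarith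
  · rw [hump_one]; linarith

end Hump

theorem deepLinear_peak_value {α L p : ℝ} (hα : 0 < α) (hL : 0 < L) (hp : 0 < p)
    (hLp : 2 * α * L + 2 * L - 2 = L * p) :
    2 * α * L * (2 * α * L + 2 * L - 2) ^ (1 + 1 / α - 1 / (α * L)) /
        (4 * α * L + 2 * L - 2) ^ (2 + 1 / α - 1 / (α * L)) =
      hump p (2 * α) (humpPeak p (2 * α)) := by
  have hLpa : 4 * α * L + 2 * L - 2 = L * (p + 2 * α) := by linear_combination hLp
  have hexp : 1 + 1 / α - 1 / (α * L) = p / (2 * α) := by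
    field_simp; linear_combination hLp
  have hexp' : 2 + 1 / α - 1 / (α * L) = p / (2 * α) + 1 := by rw [← hexp]; ring
  rw [hump_humpPeak hp (by positivity), hLp, hLpa, hexp, hexp', Real.rpow_add_one (by positivity),
    Real.mul_rpow hL.le hp.le, Real.mul_rpow hL.le (by positivity),
    Real.div_rpow hp.le (by positivity)]
  field_simp

theorem deep_linear_invariant_h_sign_structure_general
    (α η : ℝ) (l : ℕ) (hα : 0 < α)
    (hpos : 0 < 2 * α * (l : ℝ) + 2 * (l : ℝ) - 2)
    (hη1 : 0 < η)
    (hη2 : η <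
      2 * α * (l : ℝ) *
          (2 * α * (l : ℝ) + 2 * (l : ℝ) - 2) ^
            (1 + 1 / α - 1 / (α * (l : ℝ))) /
        (4 * α * (l : ℝ) + 2 * (l : ℝ) - 2) ^
            (2 + 1 / α - 1 / (α * (l : ℝ)))) :
    let h : ℝ → ℝ := fun lam =>
      -lam ^ (4 * α + 2 - 2 / (l : ℝ)) + lam ^ (2 * α + 2 - 2 / (l : ℝ)) - η
    let lamstar : ℝ :=
      ((2 * α * (l : ℝ) + 2 * (l : ℝ) - 2) /
        (4 * α * (l : ℝ) + 2 * (l : ℝ) - 2)) ^ (1 / (2 * α))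
    ∃ lamMinus lamPlus : ℝ,
      lamMinus ∈ Set.Ioo 0 lamstar ∧ lamPlus ∈ Set.Ioo lamstar 1 ∧
      (∀ lam ∈ Set.Ioo (0 : ℝ) lamMinus, h lam < 0) ∧
      (∀ lam ∈ Set.Ioo lamMinus lamPlus, 0 < h lam) ∧
      h lamMinus = 0 ∧ h lamPlus = 0 ∧
      (∀ lam ∈ Set.Ioi lamPlus, h lam < 0) := by
  intro h lamstar
  have hl : (0 : ℝ) < l := by nlinarith [(Nat.cast_nonneg l : (0 : ℝ) ≤ l)]
  set p := 2 * α + 2 - 2 / (l : ℝ) with hp_def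
  have hLp : 2 * α * l + 2 * l - 2 = l * p := by rw [hp_def]; field_simp
  have hp : 0 < p := pos_of_mul_pos_right (hLp ▸ hpos) hl.le
  have hh : h = fun x => hump p (2 * α) x - η := by
    funext x
    simp only [h, hump, show 4 * α + 2 - 2 / (l : ℝ) = p + 2 * α by ring]
    ring
  have hstar : lamstar = humpPeak p (2 * α) := by
    simp only [lamstar, humpPeak]
    congr 1
    rw [hLp, show 4 * α * l + 2 * l - 2 = l * (p + 2 * α) by linear_combination hLp,
      mul_div_mul_left _ _ hl.ne']
  rw [hh, hstar]
  exact exists_zeros_hump_sub hp (by positivity) hη1 (deepLinear_peak_value hα hl hp hLp ▸ hη2)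

/-- sign structure of
`h(λ) = −λ^{4α+2−2/l} + λ^{2α+2−2/l} − η` (deep linear network, invariant
subspace): with `2αl+2l−2 > 0` and
`0 < η < 2αl(2αl+2l−2)^{1+1/α−1/(αl)} / (4αl+2l−2)^{2+1/α−1/(αl)}`,
there are zeros `λ⁻ ∈ (0, λ*)` and `λ⁺ ∈ (λ*, 1)` with `h < 0` on `(0, λ⁻)`,
`h > 0` on `(λ⁻, λ⁺)` and `h < 0` on `(λ⁺, ∞)`. -/
theorem deep_linear_invariant_h_sign_structure
    (α η : ℝ) (l : ℕ) (hα : 0 < α) (hl : 1 ≤ l)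
    (hpos : 0 < 2 * α * (l : ℝ) + 2 * (l : ℝ) - 2)
    (hη1 : 0 < η)
    (hη2 : η <
      2 * α * (l : ℝ) *
          (2 * α * (l : ℝ) + 2 * (l : ℝ) - 2) ^
            (1 + 1 / α - 1 / (α * (l : ℝ))) /
        (4 * α * (l : ℝ) + 2 * (l : ℝ) - 2) ^
            (2 + 1 / α - 1 / (α * (l : ℝ)))) :
    let h : ℝ → ℝ := fun lam =>
      -lam ^ (4 * α + 2 - 2 / (l : ℝ)) + lam ^ (2 * α + 2 - 2 / (l : ℝ)) - η
    let lamstar : ℝ :=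
      ((2 * α * (l : ℝ) + 2 * (l : ℝ) - 2) /
        (4 * α * (l : ℝ) + 2 * (l : ℝ) - 2)) ^ (1 / (2 * α))
    ∃ lamMinus lamPlus : ℝ,
      lamMinus ∈ Set.Ioo 0 lamstar ∧ lamPlus ∈ Set.Ioo lamstar 1 ∧
      (∀ lam ∈ Set.Ioo (0 : ℝ) lamMinus, h lam < 0) ∧
      (∀ lam ∈ Set.Ioo lamMinus lamPlus, 0 < h lam) ∧
      h lamMinus = 0 ∧ h lamPlus = 0 ∧
      (∀ lam ∈ Set.Ioi lamPlus, h lam < 0) :=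
  deep_linear_invariant_h_sign_structure_general α η l hα hpos hη1 hη2
end

section
/- Let α > 0, let l ≥ 1 be an integer with 2αl+2l−2 > 0, let σ² > 0, and suppose η lies in the open interval ( 2αl(2αl+2l−2)^{1+1/α−1/(αl)} / ((4αl+2l−2)^{2+1/α−1/(αl)}(1+σ²)^{1+1/α−1/(αl)}), 2αl(2αl+2l−2)^{1+1/α−1/(αl)} / (4αl+2l−2)^{2+1/α−1/(αl)} ). Let δ ≥ ((2αl+2l−2)/(4αl+2l−2))^{1/(2α)}. Then: (i) every differentiable λ_B : [0,∞) → ℝ with λ_B(0) = δ satisfying λ_B'(t) = l·λ_B(t)·(−(1+σ²)λ_B(t)^{4α+2−2/l} + λ_B(t)^{2α+2−2/l} − η) converges to 0 as t → ∞; and (ii) every differentiable λ_S : [0,∞) → ℝ with λ_S(0) = δ satisfying λ_S'(t) = l·λ_S(t)·(−λ_S(t)^{4α+2−2/l} + λ_S(t)^{2α+2−2/l} − η) converges to a limit c with ((2αl+2l−2)/(4αl+2l−2))^{1/(2α)} < c < 1 and −c^{4α+2−2/l} + c^{2α+2−2/l} − η = 0. -/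
/-!
Put `m = 1 + 1/α - 1/(αl)`, so that `2α + 2 - 2/l = 2αm` and `4α + 2 - 2/l = 2α(m + 1)`. For
`x > 0` and `u = x ^ (2α)` the bracket of either equation is `φ(A u) / A ^ m - η`, where
`φ(v) = v ^ m (1 - v)` (`powMulOneSub m`) and `A = 1 + σ²` resp. `A = 1`; `φ` increases up to
`v* = m/(m+1)`, decreases afterwards, and the two bounds on `η` say exactly
`φ(v*) / (1 + σ²) ^ m < η < φ(v*)`. Hence the bracket of `λ_B` is negative for every `x > 0`,
so `0` attracts `λ_B`, while `φ = η` has a root `c ^ (2α) ∈ (v*, 1)` on the decreasing branch of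
`φ`, so the right-hand side for `λ_S` is positive on `[v* ^ (1/(2α)), c)` and negative on
`(c, ∞)`. In both cases the limit follows from the behaviour of a scalar autonomous equation
`x' = F x` near an equilibrium with `F > 0` below and `F < 0` above: levels where `F` has the
right sign cannot be crossed, and a solution cannot stay in a compact set where `F` is bounded
away from `0`.
-/

open Set Filter Topology

namespace Autonomous

variable {f F : ℝ → ℝ}

theorem le_of_neg_at_level {t₀ x : ℝ} (hf : ∀ t ≥ t₀, HasDerivAt f (F (f t)) t) (hx : F x < 0)
    (h₀ : f t₀ ≤ x) : ∀ t ≥ t₀, f t ≤ x := by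
  intro t ht
  exact image_le_of_deriv_right_lt_deriv_boundary' (B := fun _ => x) (B' := 0)
    (fun s hs => (hf s hs.1).continuousAt.continuousWithinAt)
    (fun s hs => (hf s hs.1).hasDerivWithinAt) h₀ continuousOn_const
    (fun _ _ => hasDerivWithinAt_const _ _ _) (fun _ _ hs => hs ▸ hx) ⟨ht, le_rfl⟩

theorem ge_of_pos_at_level {t₀ x : ℝ} (hf : ∀ t ≥ t₀, HasDerivAt f (F (f t)) t) (hx : 0 < F x)
    (h₀ : x ≤ f t₀) : ∀ t ≥ t₀, x ≤ f t := by
  intro t ht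
  exact image_le_of_deriv_right_lt_deriv_boundary' (f := fun _ => x) (f' := 0) continuousOn_const
    (fun _ _ => hasDerivWithinAt_const _ _ _) h₀
    (fun s hs => (hf s hs.1).continuousAt.continuousWithinAt)
    (fun s hs => (hf s hs.1).hasDerivWithinAt) (fun _ _ hs => hs ▸ hx) ⟨ht, le_rfl⟩

theorem exists_le_of_neg {x y : ℝ} (hf : ∀ t ≥ 0, HasDerivAt f (F (f t)) t)
    (hF : ContinuousOn F (Icc x y)) (hneg : ∀ z ∈ Icc x y, F z < 0) (hy : ∀ t ≥ 0, f t ≤ y) :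
    ∃ t ≥ 0, f t ≤ x := by
  by_contra! hgt
  have hxy : x ≤ y := (hgt 0 le_rfl).le.trans (hy 0 le_rfl)
  obtain ⟨z₀, hz₀, hmax⟩ := isCompact_Icc.exists_isMaxOn (nonempty_Icc.2 hxy) hF
  have hκ : 0 < -F z₀ := neg_pos.2 (hneg z₀ hz₀)
  set T := (y - x) / -F z₀ + 1
  have hT : 0 < T := by positivity
  obtain ⟨ξ, hξ, hslope⟩ := exists_hasDerivAt_eq_slope f (fun t => F (f t)) hT
    (fun t ht => (hf t ht.1).continuousAt.continuousWithinAt) (fun t ht => hf t ht.1.le)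
  have hξmax : F (f ξ) ≤ F z₀ := hmax ⟨(hgt ξ hξ.1.le).le, hy ξ hξ.1.le⟩
  have hκT : -F z₀ * T = y - x - F z₀ := by
    rw [mul_add, mul_div_cancel₀ _ hκ.ne', mul_one]; ring
  rw [sub_zero, eq_div_iff hT.ne'] at hslope
  nlinarith [hgt T hT.le, hy 0 le_rfl]

theorem eventually_le_of_neg {x y : ℝ} (hf : ∀ t ≥ 0, HasDerivAt f (F (f t)) t) (hxy : x ≤ y)
    (hF : ContinuousOn F (Icc x y)) (hneg : ∀ z ∈ Icc x y, F z < 0) (h₀ : f 0 ≤ y) :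
    ∀ᶠ t in atTop, f t ≤ x := by
  obtain ⟨t₁, ht₁, hx⟩ :=
    exists_le_of_neg hf hF hneg (le_of_neg_at_level hf (hneg y ⟨hxy, le_rfl⟩) h₀)
  exact eventually_atTop.2 ⟨t₁, le_of_neg_at_level (fun t ht => hf t (ht₁.trans ht))
    (hneg x ⟨le_rfl, hxy⟩) hx⟩

theorem eventually_ge_of_pos {x y : ℝ} (hf : ∀ t ≥ 0, HasDerivAt f (F (f t)) t) (hyx : y ≤ x)
    (hF : ContinuousOn F (Icc y x)) (hpos : ∀ z ∈ Icc y x, 0 < F z) (h₀ : y ≤ f 0) :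
    ∀ᶠ t in atTop, x ≤ f t := by
  have hmaps : MapsTo Neg.neg (Icc (-x) (-y)) (Icc y x) := fun z hz =>
    ⟨le_neg_of_le_neg hz.2, neg_le.1 hz.1⟩
  have := eventually_le_of_neg (f := -f) (F := fun z => -F (-z)) (x := -x) (y := -y)
    (fun t ht => by simpa using (hf t ht).neg) (neg_le_neg hyx) (hF.comp continuousOn_neg hmaps).neg
    (fun z hz => neg_neg_of_pos (hpos _ (hmaps hz))) (neg_le_neg h₀)
  filter_upwards [this] with t ht using neg_le_neg_iff.1 ht

theorem tendsto_of_stable {p a : ℝ} (hf : ∀ t ≥ 0, HasDerivAt f (F (f t)) t) (hpa : p < a)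
    (hF : ContinuousOn F (Ioi p)) (hpos : ∀ z ∈ Ioo p a, 0 < F z) (hneg : ∀ z ∈ Ioi a, F z < 0)
    (h₀ : p < f 0) : Tendsto f atTop (𝓝 a) := by
  refine tendsto_order.2 ⟨fun b hb => ?_, fun b hb => ?_⟩
  · obtain ⟨y, hby, hya⟩ := exists_between (max_lt hb hpa)
    have hpy : p < min (f 0) y := lt_min h₀ ((le_max_right b p).trans_lt hby)
    filter_upwards [eventually_ge_of_pos hf (min_le_right (f 0) y)
      (hF.mono fun z hz => hpy.trans_le hz.1)
      (fun z hz => hpos z ⟨hpy.trans_le hz.1, hz.2.trans_lt hya⟩) (min_le_left _ _)] with t ht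
    exact ((le_max_left b p).trans_lt hby).trans_le ht
  · obtain ⟨x, hax, hxb⟩ := exists_between hb
    filter_upwards [eventually_le_of_neg hf (le_max_left x (f 0))
      (hF.mono fun z hz => (hpa.trans hax).trans_le hz.1)
      (fun z hz => hneg z (hax.trans_le hz.1)) (le_max_right _ _)] with t ht
    exact ht.trans_lt hxb

end Autonomous

noncomputable def powMulOneSub (m v : ℝ) : ℝ := v ^ m * (1 - v)

section powMulOneSub

variable {m : ℝ}

theorem powMulOneSub_max_pos (hm : 0 < m) : 0 < powMulOneSub m (m / (m + 1)) :=
  mul_pos (Real.rpow_pos_of_pos (by positivity) m)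
    (sub_pos.2 ((div_lt_one (by linarith)).2 (by linarith)))

theorem continuous_powMulOneSub (hm : 0 ≤ m) : Continuous (powMulOneSub m) :=
  (Real.continuous_rpow_const hm).mul (continuous_const.sub continuous_id)

theorem hasDerivAt_powMulOneSub {v : ℝ} (hv : 0 < v) :
    HasDerivAt (powMulOneSub m) (v ^ (m - 1) * (m - (m + 1) * v)) v := by
  have hpow : v ^ m = v ^ (m - 1) * v := by rw [← Real.rpow_add_one hv.ne']; ring_nf
  exact ((Real.hasDerivAt_rpow_const (p := m) (Or.inl hv.ne')).mul
    ((hasDerivAt_id' v).const_sub 1)).congr_deriv (by rw [hpow]; ring)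

theorem powMulOneSub_strictMonoOn (hm : 0 < m) :
    StrictMonoOn (powMulOneSub m) (Icc 0 (m / (m + 1))) := by
  refine strictMonoOn_of_deriv_pos (convex_Icc _ _) (continuous_powMulOneSub hm.le).continuousOn
    fun v hv => ?_
  rw [interior_Icc] at hv
  rw [(hasDerivAt_powMulOneSub hv.1).deriv]
  have : (m + 1) * v < m := (lt_div_iff₀' (by linarith)).1 hv.2
  exact mul_pos (Real.rpow_pos_of_pos hv.1 _) (by linarith)

theorem powMulOneSub_strictAntiOn (hm : 0 < m) :
    StrictAntiOn (powMulOneSub m) (Ici (m / (m + 1))) := by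
  refine strictAntiOn_of_deriv_neg (convex_Ici _) (continuous_powMulOneSub hm.le).continuousOn
    fun v hv => ?_
  rw [interior_Ici] at hv
  have hv₀ : 0 < v := (div_pos hm (by linarith)).trans hv
  rw [(hasDerivAt_powMulOneSub hv₀).deriv]
  have : m < (m + 1) * v := (div_lt_iff₀' (by linarith)).1 hv
  exact mul_neg_of_pos_of_neg (Real.rpow_pos_of_pos hv₀ _) (by linarith)

theorem powMulOneSub_le (hm : 0 < m) {v : ℝ} (hv : 0 ≤ v) :
    powMulOneSub m v ≤ powMulOneSub m (m / (m + 1)) := by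
  have hmax : 0 ≤ m / (m + 1) := by positivity
  rcases le_total v (m / (m + 1)) with h | h
  · exact (powMulOneSub_strictMonoOn hm).monotoneOn ⟨hv, h⟩ ⟨hmax, le_rfl⟩ h
  · exact (powMulOneSub_strictAntiOn hm).antitoneOn self_mem_Ici h h

theorem powMulOneSub_rpow_strictAntiOn (hm : 0 < m) {s : ℝ} (hs : 0 < s) :
    StrictAntiOn (fun x => powMulOneSub m (x ^ s)) (Ici ((m / (m + 1)) ^ (1 / s))) := by
  have hmax : 0 ≤ m / (m + 1) := by positivity
  refine (powMulOneSub_strictAntiOn hm).comp_strictMonoOn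
    ((Real.strictMonoOn_rpow_Ici_of_exponent_pos hs).mono fun x hx => ?_) fun x hx => ?_
  · exact (Real.rpow_nonneg hmax _).trans hx
  · rw [mem_Ici, ← Real.rpow_inv_rpow hmax hs.ne', ← one_div]
    exact Real.rpow_le_rpow (Real.rpow_nonneg hmax _) hx hs.le

theorem neg_mul_rpow_add_rpow_eq_powMulOneSub {A s x : ℝ} (hA : 0 < A) (hx : 0 < x) :
    -A * x ^ (s * (m + 1)) + x ^ (s * m) = powMulOneSub m (A * x ^ s) / A ^ m := by
  have hxs : 0 < x ^ s := Real.rpow_pos_of_pos hx s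
  rw [Real.rpow_mul hx.le, Real.rpow_mul hx.le, Real.rpow_add_one hxs.ne', powMulOneSub,
    Real.mul_rpow hA.le hxs.le]
  field_simp
  ring

theorem mul_rpow_div_rpow_eq_powMulOneSub {k : ℝ} (hk : 0 < k) (hm : 0 < m) :
    k * (k * m) ^ m / (k * (m + 1)) ^ (m + 1) = powMulOneSub m (m / (m + 1)) := by
  have hm₁ : 0 < m + 1 := by linarith
  rw [powMulOneSub, Real.mul_rpow hk.le hm.le, Real.mul_rpow hk.le hm₁.le,
    Real.rpow_add_one hk.ne', Real.rpow_add_one hm₁.ne', Real.div_rpow hm.le hm₁.le]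
  have := Real.rpow_pos_of_pos hk m
  have := Real.rpow_pos_of_pos hm₁ m
  field_simp
  ring

end powMulOneSub

section Dynamics

variable {k s m η : ℝ} {f : ℝ → ℝ}

theorem tendsto_zero_of_powMulOneSub_div_lt {A : ℝ} (hk : 0 < k) (hA : 0 < A) (hs : 0 < s)
    (hm : 0 < m) (hη : powMulOneSub m (m / (m + 1)) / A ^ m < η)
    (hf : ∀ t ≥ 0, HasDerivAt f (k * f t * (-A * f t ^ (s * (m + 1)) + f t ^ (s * m) - η)) t)
    (h₀ : 0 < f 0) : Tendsto f atTop (𝓝 0) := by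
  set g : ℝ → ℝ := fun x => -A * x ^ (s * (m + 1)) + x ^ (s * m) - η
  have hg : Continuous g := by fun_prop (disch := positivity)
  have hη₀ : 0 < η := (div_pos (powMulOneSub_max_pos hm) (Real.rpow_pos_of_pos hA m)).trans hη
  have hg₀ : g 0 < 0 := by
    simp only [g, Real.zero_rpow (by positivity : s * (m + 1) ≠ 0),
      Real.zero_rpow (by positivity : s * m ≠ 0)]
    linarith
  -- For `x < 0` the real power is a junk value; only its continuity at `0` is used.
  obtain ⟨p, hp, hgp⟩ :=
    exists_Ioc_subset_of_mem_nhds (hg.continuousAt.eventually_lt continuousAt_const hg₀)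
      (exists_lt 0)
  refine Autonomous.tendsto_of_stable (F := fun x => k * x * g x) hf hp
    (by fun_prop : Continuous fun x => k * x * g x).continuousOn (fun x hx => ?_)
    (fun x hx => ?_) (hp.trans h₀)
  · exact mul_pos_of_neg_of_neg (mul_neg_of_pos_of_neg hk hx.2) (hgp ⟨hx.1, hx.2.le⟩)
  · have hx : 0 < x := hx
    have hmax := powMulOneSub_le hm (by positivity : 0 ≤ A * x ^ s)
    have : g x < 0 := by
      simp only [g]
      rw [neg_mul_rpow_add_rpow_eq_powMulOneSub hA hx]
      linarith [div_le_div_of_nonneg_right hmax (Real.rpow_pos_of_pos hA m).le]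
    exact mul_neg_of_pos_of_neg (mul_pos hk hx) this

theorem exists_tendsto_of_lt_powMulOneSub (hk : 0 < k) (hs : 0 < s) (hm : 0 < m)
    (hη₀ : 0 < η) (hη : η < powMulOneSub m (m / (m + 1))) :
    ∃ c, (m / (m + 1)) ^ (1 / s) < c ∧ c < 1 ∧ -c ^ (s * (m + 1)) + c ^ (s * m) - η = 0 ∧
      ∀ f : ℝ → ℝ,
        (∀ t ≥ 0, HasDerivAt f (k * f t * (-f t ^ (s * (m + 1)) + f t ^ (s * m) - η)) t) →
        (m / (m + 1)) ^ (1 / s) ≤ f 0 → Tendsto f atTop (𝓝 c) := by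
  set g : ℝ → ℝ := fun x => -x ^ (s * (m + 1)) + x ^ (s * m) - η
  set ψ : ℝ → ℝ := fun x => powMulOneSub m (x ^ s)
  set x₀ := (m / (m + 1)) ^ (1 / s)
  have hv₀ : 0 < m / (m + 1) := by positivity
  have hx₀ : 0 < x₀ := Real.rpow_pos_of_pos hv₀ _
  have hx₀₁ : x₀ < 1 := Real.rpow_lt_one hv₀.le ((div_lt_one (by linarith)).2 (by linarith))
    (by positivity)
  have hg : ∀ x > 0, g x = ψ x - η := fun x hx => by
    simpa [g, ψ] using
      congrArg (· - η) (neg_mul_rpow_add_rpow_eq_powMulOneSub (m := m) (s := s) one_pos hx)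
  have hψ₀ : ψ x₀ = powMulOneSub m (m / (m + 1)) := by
    simp only [ψ, x₀, one_div, Real.rpow_inv_rpow hv₀.le hs.ne']
  have hψ₁ : ψ 1 = 0 := by simp [ψ, powMulOneSub]
  obtain ⟨c, ⟨hx₀c, hc₁⟩, hψc⟩ := intermediate_value_Ioo' hx₀₁.le
    ((continuous_powMulOneSub hm.le).comp (Real.continuous_rpow_const hs.le)).continuousOn
    (show η ∈ Ioo (ψ 1) (ψ x₀) by rw [hψ₀, hψ₁]; exact ⟨hη₀, hη⟩)
  replace hψc : ψ c = η := hψc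
  have hanti := powMulOneSub_rpow_strictAntiOn hm hs
  have hpos : ∀ x ∈ Ico x₀ c, 0 < k * x * g x := fun x hx => by
    have hx0 : 0 < x := hx₀.trans_le hx.1
    rw [hg x hx0, ← hψc]
    exact mul_pos (mul_pos hk hx0) (sub_pos.2 (hanti hx.1 hx₀c.le hx.2))
  refine ⟨c, hx₀c, hc₁, show g c = 0 by rw [hg c (hx₀.trans hx₀c), hψc, sub_self],
    fun f hf h₀ => ?_⟩
  have hgc : Continuous fun x => k * x * g x := by fun_prop (disch := positivity)
  obtain ⟨p, hp, hFp⟩ := exists_Ioc_subset_of_mem_nhds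
    (continuousAt_const.eventually_lt hgc.continuousAt (hpos x₀ ⟨le_rfl, hx₀c⟩)) (exists_lt x₀)
  refine Autonomous.tendsto_of_stable hf (hp.trans hx₀c) hgc.continuousOn (fun x hx => ?_)
    (fun x hx => ?_) (hp.trans_le h₀)
  · rcases le_or_gt x x₀ with h | h
    · exact hFp ⟨hx.1, h⟩
    · exact hpos x ⟨h.le, hx.2⟩
  · have hx0 : 0 < x := hx₀.trans (hx₀c.trans hx)
    rw [hg x hx0, ← hψc]
    exact mul_neg_of_pos_of_neg (mul_pos hk hx0)
      (sub_neg.2 (hanti hx₀c.le (hx₀c.trans hx).le hx))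

end Dynamics

/-- eigenvalue dynamics of the end-to-end matrix of an `l`-layer
deep linear network trained by DirectSet(α) gradient flow with weight decay
`η` in the admissible interval and initialization
`δ ≥ ((2αl+2l−2)/(4αl+2l−2))^{1/(2α)}`:
(i) the nuisance eigenvalue `λ_B` converges to `0`;
(ii) the invariant eigenvalue `λ_S` converges to a limit `c` with
`((2αl+2l−2)/(4αl+2l−2))^{1/(2α)} < c < 1` and
`−c^{4α+2−2/l} + c^{2α+2−2/l} − η = 0`. -/
theorem deep_linear_eigen_dynamics
    (α σ2 η δ : ℝ) (l : ℕ) (hα : 0 < α) (hl : 1 ≤ l) (hσ : 0 < σ2)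
    (hpos : 0 < 2 * α * (l : ℝ) + 2 * (l : ℝ) - 2)
    (hη1 :
      2 * α * (l : ℝ) *
          (2 * α * (l : ℝ) + 2 * (l : ℝ) - 2) ^
            (1 + 1 / α - 1 / (α * (l : ℝ))) /
        ((4 * α * (l : ℝ) + 2 * (l : ℝ) - 2) ^
            (2 + 1 / α - 1 / (α * (l : ℝ))) *
          (1 + σ2) ^ (1 + 1 / α - 1 / (α * (l : ℝ)))) < η)
    (hη2 : η <
      2 * α * (l : ℝ) *
          (2 * α * (l : ℝ) + 2 * (l : ℝ) - 2) ^
            (1 + 1 / α - 1 / (α * (l : ℝ))) /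
        (4 * α * (l : ℝ) + 2 * (l : ℝ) - 2) ^
            (2 + 1 / α - 1 / (α * (l : ℝ))))
    (hδ : ((2 * α * (l : ℝ) + 2 * (l : ℝ) - 2) /
        (4 * α * (l : ℝ) + 2 * (l : ℝ) - 2)) ^ (1 / (2 * α)) ≤ δ) :
    ((∀ lamB : ℝ → ℝ, Differentiable ℝ lamB → lamB 0 = δ →
      (∀ t : ℝ, 0 ≤ t →
        deriv lamB t = (l : ℝ) * lamB t *
          (-(1 + σ2) * lamB t ^ (4 * α + 2 - 2 / (l : ℝ))
            + lamB t ^ (2 * α + 2 - 2 / (l : ℝ)) - η)) →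
      Tendsto lamB atTop (nhds 0)) ∧
    (∀ lamS : ℝ → ℝ, Differentiable ℝ lamS → lamS 0 = δ →
      (∀ t : ℝ, 0 ≤ t →
        deriv lamS t = (l : ℝ) * lamS t *
          (-lamS t ^ (4 * α + 2 - 2 / (l : ℝ))
            + lamS t ^ (2 * α + 2 - 2 / (l : ℝ)) - η)) →
      ∃ c : ℝ, Tendsto lamS atTop (nhds c) ∧
        ((2 * α * (l : ℝ) + 2 * (l : ℝ) - 2) /
          (4 * α * (l : ℝ) + 2 * (l : ℝ) - 2)) ^ (1 / (2 * α)) < c ∧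
        c < 1 ∧
        -c ^ (4 * α + 2 - 2 / (l : ℝ)) + c ^ (2 * α + 2 - 2 / (l : ℝ)) - η
          = 0)) := by
  set L : ℝ := (l : ℝ)
  have hL : 0 < L := Nat.cast_pos.2 hl
  set m := 1 + 1 / α - 1 / (α * L) with hm_def
  have hk : 0 < 2 * α * L := by positivity
  have hnum : 2 * α * L + 2 * L - 2 = 2 * α * L * m := by rw [hm_def]; field_simp
  have hden : 4 * α * L + 2 * L - 2 = 2 * α * L * (m + 1) := by rw [hm_def]; field_simp; ring
  have hexp : 2 + 1 / α - 1 / (α * L) = m + 1 := by rw [hm_def]; ring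
  have hP : 4 * α + 2 - 2 / L = 2 * α * (m + 1) := by rw [hm_def]; field_simp; ring
  have hQ : 2 * α + 2 - 2 / L = 2 * α * m := by rw [hm_def]; field_simp
  have hm : 0 < m := pos_of_mul_pos_right (hnum ▸ hpos) hk.le
  rw [hnum, hden, hexp, ← div_div, mul_rpow_div_rpow_eq_powMulOneSub hk hm] at hη1
  rw [hnum, hden, hexp, mul_rpow_div_rpow_eq_powMulOneSub hk hm] at hη2
  rw [hnum, hden, mul_div_mul_left _ _ hk.ne'] at hδ ⊢
  simp only [hP, hQ]
  have hη₀ : 0 < η :=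
    (div_pos (powMulOneSub_max_pos hm) (Real.rpow_pos_of_pos (by positivity) m)).trans hη1
  obtain ⟨c, hc₀, hc₁, hroot, hlim⟩ :=
    exists_tendsto_of_lt_powMulOneSub hL (by positivity : 0 < 2 * α) hm hη₀ hη2
  refine ⟨fun lamB hd h0 hode => ?_, fun lamS hd h0 hode => ?_⟩
  · refine tendsto_zero_of_powMulOneSub_div_lt hL (by positivity) (by positivity) hm hη1
      (fun t ht => hode t ht ▸ (hd t).hasDerivAt) (h0 ▸ ?_)
    exact (Real.rpow_pos_of_pos (by positivity) _).trans_le hδ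
  · exact ⟨c, hlim lamS (fun t ht => hode t ht ▸ (hd t).hasDerivAt) (h0 ▸ hδ), hc₀, hc₁, hroot⟩
end
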